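/- arXiv:2506.12961 — 3 statements merged into one kernel-verified Lean document; each statement's English description precedes it below -/
import Mathlib

section
/- If a voting rule f satisfies f(P^C) = f(P)^C for every profile P and every candidate C, then f satisfies IIA: for all profiles P, P' and candidates A, B, if every voter ranks A vs B identically in P and P', then f(P) and f(P') rank A and B in the same relative order. -/
open scoped Classical

noncomputable section

/-- The profile obtained from `P` by deleting candidate `c` from every ballot. -/
def eraseCand {V C : Type*} (c : C) (P : V → C → C → Prop) : V → C → C → Prop :=
  fun i A B => P i A B ∧ A ≠ c ∧ B ≠ c

lemma eraseList_iff {V C : Type*} (l : List C) (P : V → C → C → Prop) (i : V) (x y : C) :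
    (l.foldr eraseCand P) i x y ↔ P i x y ∧ ∀ c ∈ l, x ≠ c ∧ y ≠ c := by
  induction l with
  | nil => simp
  | cons c l ih =>
    simp only [List.foldr_cons, eraseCand, ih, List.mem_cons]
    constructor
    · rintro ⟨⟨hP, hl⟩, hx, hy⟩
      exact ⟨hP, fun d hd => hd.elim (fun h => h ▸ ⟨hx, hy⟩) (hl d)⟩
    · rintro ⟨hP, h⟩
      exact ⟨⟨hP, fun d hd => h d (Or.inr hd)⟩, (h c (Or.inl rfl)).1, (h c (Or.inl rfl)).2⟩

lemma eraseList_f {V C : Type*} (f : (V → C → C → Prop) → C → C → Prop)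
    (hdel : ∀ (P : V → C → C → Prop) (c A B : C), A ≠ c → B ≠ c →
      (f (eraseCand c P) A B ↔ f P A B))
    (l : List C) (P : V → C → C → Prop) (A B : C) (hA : A ∉ l) (hB : B ∉ l) :
    f (l.foldr eraseCand P) A B ↔ f P A B := by
  induction l with
  | nil => rfl
  | cons c l ih =>
    simp only [List.mem_cons, not_or] at hA hB
    rw [List.foldr_cons, hdel _ c A B hA.1 hB.1]
    exact ih hA.2 hB.2

/-- If removing any single candidate commutes with the voting rule (`f(P^c) = f(P)^c` for all
profiles `P` and candidates `c`), then `f` satisfies IIA: whenever every voter ranks `A` vs `B`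
identically in profiles `P` and `P'`, the outputs `f(P)` and `f(P')` rank `A`,`B` the same way. -/
theorem stmt6 {V C : Type*} [Fintype V] [Fintype C]
    (hC : 2 ≤ Fintype.card C)
    (f : (V → C → C → Prop) → C → C → Prop)
    (hf : ∀ Q : V → C → C → Prop, IsStrictTotalOrder C (f Q))
    (hdel : ∀ (P : V → C → C → Prop) (c A B : C), A ≠ c → B ≠ c →
      (f (eraseCand c P) A B ↔ f P A B)) :
    ∀ (P P' : V → C → C → Prop) (A B : C),
      (∀ i x, ¬ P i x x) → (∀ i x, ¬ P' i x x) →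
      (∀ i, (P i A B ↔ P' i A B) ∧ (P i B A ↔ P' i B A)) →
      (f P A B ↔ f P' A B) := by
  intro P P' A B hirr hirr' hiff
  set l := (Finset.univ.filter fun c : C => c ≠ A ∧ c ≠ B).toList with hl
  have hmem : ∀ c : C, c ∈ l ↔ c ≠ A ∧ c ≠ B := by
    intro c; simp [hl]
  have hA : A ∉ l := by simp [hmem]
  have hB : B ∉ l := by simp [hmem]
  have key : l.foldr eraseCand P = l.foldr eraseCand P' := by
    funext i x y
    apply propext
    rw [eraseList_iff, eraseList_iff]
    constructor <;> rintro ⟨hP, hK⟩ <;> refine ⟨?_, hK⟩ <;>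
    · have hx : x = A ∨ x = B := by
        by_contra h
        push_neg at h
        exact (hK x ((hmem x).2 ⟨h.1, h.2⟩)).1 rfl
      have hy : y = A ∨ y = B := by
        by_contra h
        push_neg at h
        exact (hK y ((hmem y).2 ⟨h.1, h.2⟩)).2 rfl
      rcases hx with rfl | rfl <;> rcases hy with rfl | rfl <;>
        first
          | exact absurd hP (hirr i _)
          | exact absurd hP (hirr' i _)
          | exact ((hiff i).1.mp hP)
          | exact ((hiff i).1.mpr hP)
          | exact ((hiff i).2.mp hP)
          | exact ((hiff i).2.mpr hP)
  rw [← eraseList_f f hdel l P A B hA hB, key, eraseList_f f hdel l P' A B hA hB]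
end
end

section
/- σ_U(f,P) = 0 if and only if the profile P contains a unanimous strict preference between some pair of candidates that is reversed in the output ranking f(P). -/
open scoped Classical

noncomputable section

/-- Relative ranking entry of voter `i` on the pair `(A,B)`. -/
def Xrel {V C : Type*} (P : V → C → C → Prop) (A B : C) (i : V) : ℝ :=
  if P i A B then 1 else if P i B A then 0 else 1/2

/-- The alignment `I_{A,B}(f,P)`: the share of voters ranking `A,B` the same way as the
output ranking `f(P)`, with ties counting as half agreement. -/
def align {V C : Type*} [Fintype V] (f : (V → C → C → Prop) → C → C → Prop)
    (P : V → C → C → Prop) (A B : C) : ℝ :=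
  if f P A B then (∑ i, Xrel P A B i) / (Fintype.card V)
  else (∑ i, Xrel P B A i) / (Fintype.card V)

/-- The misalignment score `M(f,P)`: the minimum alignment over pairs of candidates. -/
def Mmin {V C : Type*} [Fintype V] (f : (V → C → C → Prop) → C → C → Prop)
    (P : V → C → C → Prop) : ℝ :=
  sInf {x : ℝ | ∃ A B : C, A ≠ B ∧ x = align f P A B}

/-- `σ_U(f,P) = M/(1−M)` if `M(f,P) < 1/2`, and `1` otherwise. -/
def sigmaU {V C : Type*} [Fintype V] (f : (V → C → C → Prop) → C → C → Prop)
    (P : V → C → C → Prop) : ℝ :=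
  if Mmin f P < 1/2 then Mmin f P / (1 - Mmin f P) else 1

/-!
`M(f,P)` is the minimum of finitely many nonnegative alignments, and `σ_U(f,P)` vanishes exactly
when `M(f,P)` does, so `σ_U(f,P) = 0` iff some pair has alignment `0`. Because `f(P)` is a strict
total order, `I_{A,B} = I_{B,A}`; orienting the pair so that `B ≻_{f(P)} A`, the alignment is the
average of the `X_{B,A}` entries, which vanishes iff every voter strictly prefers `A` to `B`.
-/

-- Also true for empty `V`, where `x / 0 = 0` and the right side is vacuous.
theorem sum_div_card_eq_zero_iff_of_nonneg {V : Type*} [Fintype V] {g : V → ℝ}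
    (hg : ∀ i, 0 ≤ g i) : (∑ i, g i) / Fintype.card V = 0 ↔ ∀ i, g i = 0 := by
  rw [div_eq_zero_iff, Finset.sum_eq_zero_iff_of_nonneg fun i _ => hg i, Nat.cast_eq_zero,
    Fintype.card_eq_zero_iff]
  simp only [Finset.mem_univ, true_implies]
  exact ⟨fun h => h.elim id fun _ => fun i => isEmptyElim i, Or.inl⟩

theorem Set.Finite.csInf_eq_iff_mem {α : Type*} [ConditionallyCompleteLinearOrder α]
    {S : Set α} {a : α} (hS : S.Finite) (hne : S.Nonempty)
    (ha : a ∈ lowerBounds S) : sInf S = a ↔ a ∈ S :=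
  ⟨fun h => h ▸ hne.csInf_mem hS, fun h => IsLeast.csInf_eq ⟨h, ha⟩⟩

section Alignment

variable {V C : Type*}

theorem Xrel_nonneg (P : V → C → C → Prop) (A B : C) (i : V) : 0 ≤ Xrel P A B i := by
  unfold Xrel; split_ifs <;> norm_num

theorem Xrel_eq_zero_iff (P : V → C → C → Prop) (A B : C) (i : V) :
    Xrel P A B i = 0 ↔ ¬ P i A B ∧ P i B A := by
  unfold Xrel; split_ifs <;> simp_all

variable [Fintype V] (f : (V → C → C → Prop) → C → C → Prop)
  (P : V → C → C → Prop)

theorem align_nonneg (A B : C) : 0 ≤ align f P A B := by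
  unfold align
  split_ifs <;> exact div_nonneg (Finset.sum_nonneg fun i _ => Xrel_nonneg P _ _ i) (by positivity)

theorem align_symm [IsStrictTotalOrder C (f P)] {A B : C} (hAB : A ≠ B) :
    align f P A B = align f P B A := by
  unfold align
  rcases trichotomous_of (f P) A B with h | h | h
  · rw [if_pos h, if_neg (asymm_of (f P) h)]
  · exact absurd h hAB
  · rw [if_neg (asymm_of (f P) h), if_pos h]

theorem align_eq_zero_iff_of_rel [IsStrictTotalOrder C (f P)]
    (hP : ∀ i A B, ¬ (P i A B ∧ P i B A))
    {A B : C} (hBA : f P B A) : align f P A B = 0 ↔ ∀ i, P i A B := by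
  unfold align
  rw [if_neg (asymm_of (f P) hBA), sum_div_card_eq_zero_iff_of_nonneg (Xrel_nonneg P B A)]
  refine forall_congr' fun i => ?_
  rw [Xrel_eq_zero_iff]
  exact ⟨And.right, fun h => ⟨fun h' => hP i A B ⟨h, h'⟩, h⟩⟩

theorem exists_align_eq_zero_iff [IsStrictTotalOrder C (f P)]
    (hP : ∀ i A B, ¬ (P i A B ∧ P i B A)) :
    (∃ A B : C, A ≠ B ∧ align f P A B = 0) ↔
      ∃ A B : C, A ≠ B ∧ (∀ i, P i A B) ∧ f P B A := by
  constructor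
  · rintro ⟨A, B, hAB, h0⟩
    rcases trichotomous_of (f P) A B with h | h | h
    · rw [align_symm f P hAB, align_eq_zero_iff_of_rel f P hP h] at h0
      exact ⟨B, A, hAB.symm, h0, h⟩
    · exact absurd h hAB
    · exact ⟨A, B, hAB, (align_eq_zero_iff_of_rel f P hP h).1 h0, h⟩
  · rintro ⟨A, B, hAB, hall, h⟩
    exact ⟨A, B, hAB, (align_eq_zero_iff_of_rel f P hP h).2 hall⟩

theorem Mmin_eq_zero_iff [Finite C] [Nontrivial C] :
    Mmin f P = 0 ↔ ∃ A B : C, A ≠ B ∧ align f P A B = 0 := by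
  have hfin : {x : ℝ | ∃ A B : C, A ≠ B ∧ x = align f P A B}.Finite :=
    (Set.finite_range fun p : C × C => align f P p.1 p.2).subset
      fun _ ⟨A, B, _, hx⟩ => ⟨(A, B), hx.symm⟩
  obtain ⟨A, B, hAB⟩ := exists_pair_ne C
  rw [Mmin, hfin.csInf_eq_iff_mem ⟨_, A, B, hAB, rfl⟩
    (by rintro _ ⟨A, B, -, rfl⟩; exact align_nonneg f P A B)]
  simp only [Set.mem_ofPred_eq, eq_comm]

theorem sigmaU_eq_zero_iff : sigmaU f P = 0 ↔ Mmin f P = 0 := by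
  unfold sigmaU
  split_ifs with h
  · rw [div_eq_zero_iff, sub_eq_zero]
    exact or_iff_left (by linarith)
  · exact ⟨fun h' => absurd h' one_ne_zero, fun h' => absurd (h' ▸ h) (by norm_num)⟩

end Alignment

theorem stmt8_general {V C : Type*} [Fintype V] [Fintype C]
    (hC : 2 ≤ Fintype.card C)
    (f : (V → C → C → Prop) → C → C → Prop)
    (hf : ∀ Q : V → C → C → Prop, IsStrictTotalOrder C (f Q))
    (P : V → C → C → Prop) (hP : ∀ i A B, ¬ (P i A B ∧ P i B A)) :
    sigmaU f P = 0 ↔ ∃ A B : C, A ≠ B ∧ (∀ i, P i A B) ∧ f P B A := by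
  have : Nontrivial C := Fintype.one_lt_card_iff_nontrivial.1 hC
  have := hf P
  rw [sigmaU_eq_zero_iff, Mmin_eq_zero_iff, exists_align_eq_zero_iff f P hP]

/-- `σ_U(f,P) = 0` if and only if the profile `P` contains a unanimous strict preference
between some pair of candidates that is reversed in the output ranking `f(P)`. -/
theorem stmt8 {V C : Type*} [Fintype V] [Fintype C]
    (hn : 0 < Fintype.card V) (hC : 2 ≤ Fintype.card C)
    (f : (V → C → C → Prop) → C → C → Prop)
    (hf : ∀ Q : V → C → C → Prop, IsStrictTotalOrder C (f Q))
    (P : V → C → C → Prop) (hP : ∀ i A B, ¬ (P i A B ∧ P i B A)) :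
    sigmaU f P = 0 ↔ ∃ A B : C, A ≠ B ∧ (∀ i, P i A B) ∧ f P B A :=
  stmt8_general hC f hf P hP
end
end

section
/- If the profile P has a Condorcet cycle (G(P) contains a directed cycle), then for any voting rule f, σ_U(f,P) = g(h(W)) where W = max over pairs in D(f,P) of δ_{A,B}(P), h(x) = 1/2 − x/(2n), and g(x) = x/(1−x). In particular, σ_U(f,P) is a strictly decreasing function of the maximum weight among edges of G(P) that disagree with f(P), and this function does not depend on f. -/
/-!
Once `f(P)` is a strict total order, every pair of candidates is oriented by `f(P)`, and the
alignment of the pair is the share of voters siding with the orientation that `f(P)` rejects: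
`1/2 - δ/(2n)` where `δ` is the margin of the rejected direction. The minimum alignment is
therefore `h(W)` for the largest margin `W` among disagreeing edges. Such an edge exists because
a Condorcet cycle cannot be embedded in the strict order `f(P)`, so `W > 0`, `h(W) < 1/2` and
`σ_U = g(h(W))`. Finally `g(h(x)) = (n - x)/(n + x)`, which decreases for `x > -n`.
-/

open scoped Classical

noncomputable section

/-- The signed margin `(X_{A,B}(P) − X_{B,A}(P)) · 1` by which voters prefer `A` to `B`.
The pairwise comparison graph `G(P)` has an edge from `A` to `B` exactly when this is positive. -/
def margin {V C : Type*} [Fintype V] (P : V → C → C → Prop) (A B : C) : ℝ :=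
  ∑ i, (Xrel P A B i - Xrel P B A i)

theorem not_isChain_cons_append_singleton_self {α : Type*} {r : α → α → Prop}
    [IsStrictOrder α r] (a : α) (l : List α) : ¬ List.IsChain r (a :: (l ++ [a])) := fun h =>
  irrefl_of r a <| List.rel_of_pairwise_cons h.pairwise (by simp)

theorem exists_rel_swap_of_chain_cycle {α : Type*} {r s : α → α → Prop}
    [IsStrictTotalOrder α r] (hs : ∀ a, ¬ s a a) {a : α} {l : List α}
    (h : List.IsChain s (a :: (l ++ [a]))) : ∃ b c, s b c ∧ r c b := by
  by_contra! hno
  refine not_isChain_cons_append_singleton_self (r := r) a l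
    (List.IsChain.imp (fun b c hbc => ?_) h)
  rcases trichotomous_of r b c with hbc' | rfl | hcb
  · exact hbc'
  · exact absurd hbc (hs b)
  · exact absurd hcb (hno b c hbc)

section Margin

variable {V C : Type*} (P : V → C → C → Prop)

theorem Xrel_add_Xrel_swap (hP : ∀ i A B, ¬ (P i A B ∧ P i B A)) (A B : C) (i : V) :
    Xrel P A B i + Xrel P B A i = 1 := by
  unfold Xrel
  by_cases hAB : P i A B
  · have hBA : ¬ P i B A := fun hBA => hP i A B ⟨hAB, hBA⟩
    simp [hAB, hBA]
  · by_cases hBA : P i B A <;> norm_num [hAB, hBA]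

variable [Fintype V]

theorem margin_self (A : C) : margin P A A = 0 := by simp [margin]

theorem margin_swap (A B : C) : margin P B A = -margin P A B := by
  simp only [margin, ← Finset.sum_neg_distrib, neg_sub]

theorem sum_Xrel_eq (hP : ∀ i A B, ¬ (P i A B ∧ P i B A)) (A B : C) :
    ∑ i, Xrel P A B i = ((Fintype.card V : ℝ) + margin P A B) / 2 := by
  have hsum : ∑ i, (Xrel P A B i + Xrel P B A i) = (Fintype.card V : ℝ) := by
    simp [Xrel_add_Xrel_swap P hP]
  rw [Finset.sum_add_distrib] at hsum
  rw [margin, Finset.sum_sub_distrib]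
  linarith

end Margin

/-- `{δ_{A,B}(P) | {A,B} ∈ D(f,P)}`, whose maximum is the `W` of the paper. -/
def disagreementWeights {V C : Type*} [Fintype V]
    (f : (V → C → C → Prop) → C → C → Prop) (P : V → C → C → Prop) : Set ℝ :=
  {x : ℝ | ∃ A B : C, 0 < margin P A B ∧ f P B A ∧ x = margin P A B}

section Alignment

variable {V C : Type*} [Fintype V] (f : (V → C → C → Prop) → C → C → Prop)
  (P : V → C → C → Prop)

theorem disagreementWeights_finite [Finite C] : (disagreementWeights f P).Finite :=
  (Set.finite_range fun p : C × C => margin P p.1 p.2).subset <| by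
    rintro x ⟨A, B, -, -, rfl⟩
    exact ⟨(A, B), rfl⟩

theorem disagreementWeights_nonempty [IsStrictTotalOrder C (f P)]
    {A : C} {l : List C}
    (hcycle : List.IsChain (fun a b => 0 < margin P a b) (A :: (l ++ [A]))) :
    (disagreementWeights f P).Nonempty := by
  obtain ⟨X, Y, hXY, hYX⟩ := exists_rel_swap_of_chain_cycle (r := f P)
    (fun a => by simp [margin_self]) hcycle
  exact ⟨_, X, Y, hXY, hYX, rfl⟩

theorem align_of_rel_swap (hn : 0 < Fintype.card V) (hP : ∀ i A B, ¬ (P i A B ∧ P i B A))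
    [Std.Asymm (f P)] {A B : C} (hBA : f P B A) :
    align f P A B = 1/2 - margin P A B / (2 * Fintype.card V) := by
  have hn' : (Fintype.card V : ℝ) ≠ 0 := by positivity
  rw [align, if_neg (asymm_of (f P) hBA), sum_Xrel_eq P hP, margin_swap]
  field_simp
  ring

theorem align_swap_of_rel [Std.Asymm (f P)] {A B : C} (hAB : f P A B) :
    align f P B A = align f P A B := by
  rw [align, align, if_pos hAB, if_neg (asymm_of (f P) hAB)]

theorem exists_align_eq [IsStrictTotalOrder C (f P)] (hn : 0 < Fintype.card V)
    (hP : ∀ i A B, ¬ (P i A B ∧ P i B A)) {A B : C} (hAB : A ≠ B) :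
    ∃ X Y, f P Y X ∧ align f P A B = 1/2 - margin P X Y / (2 * Fintype.card V) := by
  rcases trichotomous_of (f P) A B with h | rfl | h
  · exact ⟨B, A, h, by rw [← align_swap_of_rel f P h, align_of_rel_swap f P hn hP h]⟩
  · exact absurd rfl hAB
  · exact ⟨A, B, h, align_of_rel_swap f P hn hP h⟩

theorem Mmin_eq_of_isGreatest [IsStrictTotalOrder C (f P)] (hn : 0 < Fintype.card V)
    (hP : ∀ i A B, ¬ (P i A B ∧ P i B A)) {W : ℝ}
    (hW : IsGreatest (disagreementWeights f P) W) :
    Mmin f P = 1/2 - W / (2 * Fintype.card V) := by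
  obtain ⟨⟨A, B, hpos, hBA, rfl⟩, hle⟩ := hW
  refine IsLeast.csInf_eq ⟨⟨A, B, ?_, (align_of_rel_swap f P hn hP hBA).symm⟩, ?_⟩
  · rintro rfl
    simp [margin_self] at hpos
  rintro _ ⟨X, Y, hXY, rfl⟩
  obtain ⟨X', Y', hYX', heq⟩ := exists_align_eq f P hn hP hXY
  have hmargin : margin P X' Y' ≤ margin P A B := by
    by_cases hpos' : 0 < margin P X' Y'
    · exact hle ⟨X', Y', hpos', hYX', rfl⟩
    · linarith
  rw [heq]
  gcongr

theorem isGreatest_sSup_disagreementWeights [Finite C] [IsStrictTotalOrder C (f P)]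
    {A : C} {l : List C}
    (hcycle : List.IsChain (fun a b => 0 < margin P a b) (A :: (l ++ [A]))) :
    IsGreatest (disagreementWeights f P) (sSup (disagreementWeights f P)) :=
  ⟨(disagreementWeights_nonempty f P hcycle).csSup_mem (disagreementWeights_finite f P),
    fun _ hx => le_csSup (disagreementWeights_finite f P).bddAbove hx⟩

theorem sigmaU_eq_of_isGreatest [IsStrictTotalOrder C (f P)] (hn : 0 < Fintype.card V)
    (hP : ∀ i A B, ¬ (P i A B ∧ P i B A)) {W : ℝ}
    (hW : IsGreatest (disagreementWeights f P) W) :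
    sigmaU f P = (1/2 - W / (2 * Fintype.card V)) / (1 - (1/2 - W / (2 * Fintype.card V))) := by
  have hMmin := Mmin_eq_of_isGreatest f P hn hP hW
  obtain ⟨A, B, hpos, -, rfl⟩ := hW.1
  have hlt : Mmin f P < 1/2 := by
    rw [hMmin]
    linarith [div_pos hpos (by positivity : (0 : ℝ) < 2 * Fintype.card V)]
  rw [sigmaU, if_pos hlt, hMmin]

end Alignment

theorem strictAntiOn_odds_half_sub_div {n : ℝ} (hn : 0 < n) :
    StrictAntiOn (fun x : ℝ => (1/2 - x / (2 * n)) / (1 - (1/2 - x / (2 * n))))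
      (Set.Ioi (-n)) := by
  intro x hx y hy hxy
  have hpos : ∀ z ∈ Set.Ioi (-n), 0 < 1 - (1/2 - z / (2 * n)) := fun z hz => by
    have : -(1/2 : ℝ) < z / (2 * n) := by
      rw [lt_div_iff₀ (by positivity)]
      linarith [Set.mem_Ioi.mp hz]
    linarith
  have hxy' : x / (2 * n) < y / (2 * n) := by gcongr
  dsimp only
  rw [div_lt_div_iff₀ (hpos y hy) (hpos x hx)]
  nlinarith

theorem stmt13_general {V C : Type*} [Fintype V] [Fintype C]
    (hn : 0 < Fintype.card V)
    (P : V → C → C → Prop) (hP : ∀ i A B, ¬ (P i A B ∧ P i B A))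
    (hcyc : ∃ (A : C) (l : List C),
      List.Chain (fun a b => 0 < margin P a b) A (l ++ [A]))
    (f : (V → C → C → Prop) → C → C → Prop)
    (hf : IsStrictTotalOrder C (f P)) :
    sigmaU f P =
      (1/2 - (sSup {x : ℝ | ∃ A B : C, 0 < margin P A B ∧ f P B A ∧ x = margin P A B}) /
          (2 * Fintype.card V)) /
        (1 - (1/2 - (sSup {x : ℝ | ∃ A B : C, 0 < margin P A B ∧ f P B A ∧ x = margin P A B}) /
          (2 * Fintype.card V))) ∧
    StrictAntiOn
      (fun x : ℝ => (1/2 - x / (2 * Fintype.card V)) / (1 - (1/2 - x / (2 * Fintype.card V))))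
      (Set.Icc 0 (Fintype.card V : ℝ)) := by
  obtain ⟨A, l, hcycle⟩ := hcyc
  have hn' : (0 : ℝ) < Fintype.card V := by exact_mod_cast hn
  refine ⟨sigmaU_eq_of_isGreatest f P hn hP (isGreatest_sSup_disagreementWeights f P hcycle),
    (strictAntiOn_odds_half_sub_div hn').mono fun x hx => ?_⟩
  exact Set.mem_Ioi.mpr (by linarith [(Set.mem_Icc.mp hx).1])

/-- If `P` has a Condorcet cycle, then for any voting rule `f`,
`σ_U(f,P) = g(h(W))` where `W` is the maximum weight among edges of `G(P)` disagreeing with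
`f(P)`, `h(x) = 1/2 − x/(2n)` and `g(x) = x/(1−x)`; moreover `g ∘ h` is strictly decreasing
on `[0,n]`, and it does not depend on `f`. -/
theorem stmt13 {V C : Type*} [Fintype V] [Fintype C]
    (hn : 0 < Fintype.card V) (hC : 2 ≤ Fintype.card C)
    (P : V → C → C → Prop) (hP : ∀ i A B, ¬ (P i A B ∧ P i B A))
    (hcyc : ∃ (A : C) (l : List C),
      List.Chain (fun a b => 0 < margin P a b) A (l ++ [A]))
    (f : (V → C → C → Prop) → C → C → Prop)
    (hf : IsStrictTotalOrder C (f P)) :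
    sigmaU f P =
      (1/2 - (sSup {x : ℝ | ∃ A B : C, 0 < margin P A B ∧ f P B A ∧ x = margin P A B}) /
          (2 * Fintype.card V)) /
        (1 - (1/2 - (sSup {x : ℝ | ∃ A B : C, 0 < margin P A B ∧ f P B A ∧ x = margin P A B}) /
          (2 * Fintype.card V))) ∧
    StrictAntiOn
      (fun x : ℝ => (1/2 - x / (2 * Fintype.card V)) / (1 - (1/2 - x / (2 * Fintype.card V))))
      (Set.Icc 0 (Fintype.card V : ℝ)) :=
  stmt13_general hn P hP hcyc f hf
end
end
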